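/- arXiv:1202.4665 — 6 statements merged into one kernel-verified Lean document; each statement's English description precedes it below -/
import Mathlib

section
/- For every integer k ≥ 2: the set {v₀} ∪ {v_{1,1}, v_{2,1}, …, v_{2k,1}} is a dominating set of the graph G_k of size 2k+1, and every dominating set D of G_k satisfies |D|·(4k−1) ≥ 2k²+1; in particular every dominating set of G_k has more than k/2 vertices. -/
/-!
Let `S` be the set of the `2k² + 1` vertices `v₀` and `v_{i,j}` with `j ≤ k`. A closed
neighbourhood meets `S` in at most `3k + 1 ≤ 4k - 1` vertices: `v₀` has no neighbour in `S`,
a vertex `v_{i,j}` with `j ≤ k` meets `S` only in itself and in the `k` vertices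
`v_{2k+1-i,ℓ}` with `ℓ ≤ k`, and a vertex `v_{i,j}` with `j > k` meets it in `v₀`, the column
`2k + 1 - j` and those same `k` vertices. Since the closed neighbourhoods of a dominating set
cover `S`, double counting gives `|S| ≤ |D| (4k - 1)`.
-/

/-- The underlying (directional) relation of the graph `G_k` (see statement 6). -/
def GkRel (k : ℕ) :
    Option (Fin (2 * k) × Fin (2 * k)) → Option (Fin (2 * k) × Fin (2 * k)) → Prop :=
  fun x y =>
    match x, y with
    | none, some p => k ≤ p.2.val
    | some p, some q =>
        (p.1 ≠ q.1 ∧ q.2 = p.2.rev) ∨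
        (q.1 = p.1.rev ∧ p.2 ≠ q.2 ∧ ¬ (k ≤ p.2.val ∧ k ≤ q.2.val))
    | _, _ => False

/-- The graph `G_k` on `4k² + 1` vertices: `v₀` is adjacent to `v_{i,j}` exactly when
`k+1 ≤ j ≤ 2k`; `v_{i,j}` is adjacent to `v_{i',2k+1-j}` for all `i ≠ i'`; and `v_{i,j}`
is adjacent to `v_{2k+1-i,ℓ}` for all `j ≠ ℓ` such that not both `j ≥ k+1` and `ℓ ≥ k+1`;
there are no other edges. -/
def Gk (k : ℕ) : SimpleGraph (Option (Fin (2 * k) × Fin (2 * k))) :=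
  SimpleGraph.fromRel (GkRel k)

namespace SimpleGraph

variable {V : Type*} (G : SimpleGraph V)

def IsDominatingSet (D : Set V) : Prop := ∀ w ∉ D, ∃ x ∈ D, G.Adj x w

variable {G}

theorem IsDominatingSet.ncard_le_ncard_mul [Finite V] {D : Set V} (hD : G.IsDominatingSet D)
    (S : Set V) {m : ℕ} (hm : ∀ d ∈ D, (S ∩ insert d (G.neighborSet d)).ncard ≤ m) :
    S.ncard ≤ D.ncard * m := by
  have hDfin := D.toFinite
  have hcover : S ⊆ ⋃ d ∈ hDfin.toFinset, S ∩ insert d (G.neighborSet d) := by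
    intro w hw
    by_cases hwD : w ∈ D
    · exact Set.mem_biUnion (hDfin.mem_toFinset.2 hwD) ⟨hw, Set.mem_insert w _⟩
    · obtain ⟨x, hxD, hxw⟩ := hD w hwD
      exact Set.mem_biUnion (hDfin.mem_toFinset.2 hxD) ⟨hw, Set.mem_insert_of_mem x hxw⟩
  calc S.ncard ≤ (⋃ d ∈ hDfin.toFinset, S ∩ insert d (G.neighborSet d)).ncard :=
        Set.ncard_le_ncard hcover
    _ ≤ ∑ d ∈ hDfin.toFinset, (S ∩ insert d (G.neighborSet d)).ncard :=
        Finset.set_ncard_biUnion_le _ _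
    _ ≤ ∑ _d ∈ hDfin.toFinset, m :=
        Finset.sum_le_sum fun d hd => hm d (hDfin.mem_toFinset.1 hd)
    _ = D.ncard * m := by rw [Finset.sum_const, smul_eq_mul, Set.ncard_eq_toFinset_card D hDfin]

end SimpleGraph

theorem Fin.ncard_setOf_val_lt (n m : ℕ) : {i : Fin n | i.val < m}.ncard = min n m := by
  rw [Set.ncard_eq_toFinset_card', Set.toFinset_ofPred, Fin.card_filter_val_lt]

namespace Gk

variable {k : ℕ}

theorem adj_none_some_iff {p : Fin (2 * k) × Fin (2 * k)} :
    (Gk k).Adj none (some p) ↔ k ≤ p.2.val := by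
  simp [Gk, GkRel]

theorem adj_some_rev {i j j' : Fin (2 * k)} (hne : j ≠ j') (hj : j.val < k) :
    (Gk k).Adj (some (i, j)) (some (i.rev, j')) := by
  rw [Gk, SimpleGraph.fromRel_adj]
  have hlow : ¬(k ≤ j.val ∧ k ≤ j'.val) := by omega
  exact ⟨by simp [hne], Or.inl (Or.inr ⟨rfl, hne, hlow⟩)⟩

theorem eq_rev_or_eq_rev_of_adj {i j i' j' : Fin (2 * k)}
    (h : (Gk k).Adj (some (i, j)) (some (i', j'))) : j' = j.rev ∨ i' = i.rev := by
  simp only [Gk, GkRel, SimpleGraph.fromRel_adj] at h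
  rcases h with ⟨-, (⟨-, h⟩ | ⟨h, -⟩) | (⟨-, h⟩ | ⟨h, -⟩)⟩
  · exact .inl h
  · exact .inr h
  · exact .inl (Fin.rev_eq_iff.mp h.symm)
  · exact .inr (Fin.rev_eq_iff.mp h.symm)

/-- `v₀` and the `v_{i,j}` with `j ≤ k`; indices in `Fin (2 * k)` are shifted down by one. -/
def lowerHalf (k : ℕ) : Set (Option (Fin (2 * k) × Fin (2 * k))) :=
  {x | ∀ p ∈ x, p.2.val < k}

@[simp] theorem none_mem_lowerHalf : none ∈ lowerHalf k := by simp [lowerHalf]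

@[simp] theorem some_mem_lowerHalf {p : Fin (2 * k) × Fin (2 * k)} :
    some p ∈ lowerHalf k ↔ p.2.val < k := by
  obtain ⟨i, j⟩ := p
  simp [lowerHalf]

theorem ncard_lowerHalf : (lowerHalf k).ncard = 2 * k * k + 1 := by
  have hpoints : lowerHalf k = insert none (some '' (Set.univ ×ˢ {j | j.val < k})) := by
    ext (_ | p) <;> simp
  rw [hpoints, Set.ncard_insert_of_notMem (by simp),
    Set.ncard_image_of_injective _ (Option.some_injective _), Set.ncard_prod, Set.ncard_univ,
    Fin.ncard_setOf_val_lt, Nat.card_eq_fintype_card, Fintype.card_fin, min_eq_right (by omega)]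

def column (k : ℕ) (j : Fin (2 * k)) : Set (Option (Fin (2 * k) × Fin (2 * k))) :=
  Set.range fun i => some (i, j)

def lowerRow (k : ℕ) (i : Fin (2 * k)) : Set (Option (Fin (2 * k) × Fin (2 * k))) :=
  (fun j => some (i, j)) '' {j | j.val < k}

theorem ncard_column (j : Fin (2 * k)) : (column k j).ncard = 2 * k := by
  rw [column, Set.ncard_range_of_injective fun a b h => by simpa using h, Nat.card_eq_fintype_card,
    Fintype.card_fin]

theorem ncard_lowerRow (i : Fin (2 * k)) : (lowerRow k i).ncard = k := by
  rw [lowerRow, Set.ncard_image_of_injective _ fun a b h => by simpa using h,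
    Fin.ncard_setOf_val_lt, min_eq_right (by omega)]

theorem not_adj_none_of_mem_lowerHalf {w : Option (Fin (2 * k) × Fin (2 * k))}
    (hw : w ∈ lowerHalf k) : ¬ (Gk k).Adj none w := by
  rcases w with _ | p
  · exact (Gk k).irrefl
  · rw [adj_none_some_iff]
    exact (some_mem_lowerHalf.1 hw).not_ge

theorem mem_column_or_lowerRow_of_adj {i j : Fin (2 * k)} {w : Option (Fin (2 * k) × Fin (2 * k))}
    (hw : w ∈ lowerHalf k) (h : (Gk k).Adj (some (i, j)) w) :
    w = none ∨ w ∈ column k j.rev ∨ w ∈ lowerRow k i.rev := by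
  rcases w with _ | ⟨i', j'⟩
  · exact .inl rfl
  rcases eq_rev_or_eq_rev_of_adj h with rfl | rfl
  · exact .inr (.inl ⟨i', rfl⟩)
  · exact .inr (.inr ⟨j', some_mem_lowerHalf.1 hw, rfl⟩)

theorem ncard_lowerHalf_inter_closedNbhd_le (d : Option (Fin (2 * k) × Fin (2 * k))) :
    (lowerHalf k ∩ insert d ((Gk k).neighborSet d)).ncard ≤ 3 * k + 1 := by
  rcases d with _ | ⟨i, j⟩
  · have hsub : lowerHalf k ∩ insert none ((Gk k).neighborSet none) ⊆ {none} := by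
      rintro w ⟨hw, rfl | hadj⟩
      · rfl
      · exact absurd hadj (not_adj_none_of_mem_lowerHalf hw)
    calc _ ≤ ({none} : Set (Option (Fin (2 * k) × Fin (2 * k)))).ncard := Set.ncard_le_ncard hsub
      _ ≤ 3 * k + 1 := by simp
  by_cases hj : j.val < k
  · have hsub : lowerHalf k ∩ insert (some (i, j)) ((Gk k).neighborSet (some (i, j))) ⊆
        insert (some (i, j)) (lowerRow k i.rev) := by
      rintro w ⟨hw, rfl | hadj⟩
      · exact Set.mem_insert _ _
      rcases mem_column_or_lowerRow_of_adj hw hadj with rfl | ⟨i', rfl⟩ | hrow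
      · exact absurd hadj.symm (not_adj_none_of_mem_lowerHalf (some_mem_lowerHalf.2 hj))
      · have hrev := some_mem_lowerHalf.1 hw
        simp only [Fin.val_rev] at hrev
        omega
      · exact Set.mem_insert_of_mem _ hrow
    calc _ ≤ (insert (some (i, j)) (lowerRow k i.rev)).ncard := Set.ncard_le_ncard hsub
      _ ≤ (lowerRow k i.rev).ncard + 1 := Set.ncard_insert_le _ _
      _ ≤ 3 * k + 1 := by rw [ncard_lowerRow]; omega
  · have hsub : lowerHalf k ∩ insert (some (i, j)) ((Gk k).neighborSet (some (i, j))) ⊆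
        insert none (column k j.rev ∪ lowerRow k i.rev) := by
      rintro w ⟨hw, rfl | hadj⟩
      · exact absurd (some_mem_lowerHalf.1 hw) hj
      rcases mem_column_or_lowerRow_of_adj hw hadj with rfl | hcol | hrow
      · exact Set.mem_insert _ _
      · exact Set.mem_insert_of_mem _ (.inl hcol)
      · exact Set.mem_insert_of_mem _ (.inr hrow)
    calc _ ≤ (insert none (column k j.rev ∪ lowerRow k i.rev)).ncard := Set.ncard_le_ncard hsub
      _ ≤ (column k j.rev).ncard + (lowerRow k i.rev).ncard + 1 :=
        (Set.ncard_insert_le _ _).trans (Nat.add_le_add_right (Set.ncard_union_le _ _) 1)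
      _ = 3 * k + 1 := by rw [ncard_column, ncard_lowerRow]; ring

theorem two_mul_sq_add_one_le_ncard_mul (hk : 2 ≤ k)
    {D : Set (Option (Fin (2 * k) × Fin (2 * k)))} (hD : (Gk k).IsDominatingSet D) :
    2 * k ^ 2 + 1 ≤ D.ncard * (4 * k - 1) :=
  calc 2 * k ^ 2 + 1 = (lowerHalf k).ncard := by rw [ncard_lowerHalf]; ring
    _ ≤ D.ncard * (4 * k - 1) := hD.ncard_le_ncard_mul _ fun d _ =>
        (ncard_lowerHalf_inter_closedNbhd_le d).trans (by omega)

theorem ncard_insert_none_column (j : Fin (2 * k)) :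
    (insert none (column k j)).ncard = 2 * k + 1 := by
  rw [Set.ncard_insert_of_notMem (by simp [column]), ncard_column]

theorem isDominatingSet_insert_none_column {j₀ : Fin (2 * k)} (hj₀ : j₀.val < k) :
    (Gk k).IsDominatingSet (insert none (column k j₀)) := by
  rintro (_ | ⟨i, j⟩) hw
  · exact absurd (Set.mem_insert _ _) hw
  have hj : j₀ ≠ j := fun h => hw (Set.mem_insert_of_mem _ ⟨i, h ▸ rfl⟩)
  by_cases hjk : k ≤ j.val
  · exact ⟨none, Set.mem_insert _ _, adj_none_some_iff.2 hjk⟩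
  · refine ⟨some (i.rev, j₀), Set.mem_insert_of_mem _ ⟨i.rev, rfl⟩, ?_⟩
    simpa using adj_some_rev (i := i.rev) hj hj₀

end Gk

/-- For `k ≥ 2`: the set `{v₀} ∪ {v_{1,1}, …, v_{2k,1}}` is a dominating
set of `G_k` of size `2k + 1`, and every dominating set `D` of `G_k` satisfies
`|D|·(4k - 1) ≥ 2k² + 1`; in particular every dominating set has more than `k/2`
vertices. -/
theorem stmt_7 (k : ℕ) (hk : 2 ≤ k) :
    (∃ D : Set (Option (Fin (2 * k) × Fin (2 * k))),
      D = {none} ∪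
        {x | ∃ a : Fin (2 * k), x = some (a, (⟨0, by omega⟩ : Fin (2 * k)))} ∧
      D.ncard = 2 * k + 1 ∧
      ∀ w ∉ D, ∃ x ∈ D, (Gk k).Adj x w) ∧
    ∀ D : Set (Option (Fin (2 * k) × Fin (2 * k))),
      (∀ w ∉ D, ∃ x ∈ D, (Gk k).Adj x w) →
      2 * k ^ 2 + 1 ≤ D.ncard * (4 * k - 1) ∧ k < 2 * D.ncard := by
  have hcolumn :
      {none} ∪ {x | ∃ a : Fin (2 * k), x = some (a, (⟨0, by omega⟩ : Fin (2 * k)))} =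
        insert none (Gk.column k ⟨0, by omega⟩) := by
    ext x
    simp [Gk.column, eq_comm]
  refine ⟨⟨_, rfl, ?_, ?_⟩, fun D hD => ?_⟩
  · rw [hcolumn, Gk.ncard_insert_none_column]
  · rw [hcolumn]
    exact Gk.isDominatingSet_insert_none_column (show 0 < k by omega)
  · have hbound := Gk.two_mul_sq_add_one_le_ncard_mul hk hD
    refine ⟨hbound, ?_⟩
    by_contra! hsmall
    have hmul : 2 * D.ncard * (4 * k - 1) ≤ k * (4 * k - 1) := Nat.mul_le_mul_right _ hsmall
    have h4 : 4 * k - 1 + 1 = 4 * k := by omega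
    nlinarith
end

section
/- Let G be a connected simple graph with diameter at most 2, and let v₀ be a vertex of G such that the induced subgraph of G on V(G) ∖ N[v₀] is disconnected and every connected component of this subgraph contains at least one edge. Then for every proper 3-coloring c of G there exists a color a ≠ c(v₀) such that every vertex u ∉ N[v₀] satisfies c(u) ∈ {c(v₀), a}; in particular, the induced subgraph on V(G) ∖ N[v₀] is bipartite. -/
private lemma fin3_aux : ∀ a b d e : Fin 3, e ≠ a → e ≠ b → e ≠ d →
    (b = a ∨ d = a ∨ b = d) := by decide

private lemma fin3_two : ∀ b : Fin 3, ∃ a₁ a₂ : Fin 3, a₁ ≠ b ∧ a₂ ≠ b ∧ a₁ ≠ a₂ := by decide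

private lemma fin3_eq : ∀ b a₁ a₂ x : Fin 3, a₁ ≠ b → a₂ ≠ b → a₁ ≠ a₂ →
    x ≠ b → x ≠ a₁ → x = a₂ := by decide

private lemma walk_cases {V : Type*} {G : SimpleGraph V} {u w : V} (p : G.Walk u w)
    (h : p.length ≤ 2) : u = w ∨ G.Adj u w ∨ ∃ t, G.Adj u t ∧ G.Adj t w := by
  match p with
  | .nil => exact Or.inl rfl
  | .cons h1 .nil => exact Or.inr (Or.inl h1)
  | .cons h1 (.cons h2 .nil) => exact Or.inr (Or.inr ⟨_, h1, h2⟩)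
  | .cons _ (.cons _ (.cons _ _)) => simp [SimpleGraph.Walk.length_cons] at h

/-- Let `G` be a connected graph of diameter at most 2 and `v₀` a vertex
such that the induced subgraph on `V ∖ N[v₀]` is disconnected and each of its connected
components contains an edge (equivalently, every vertex outside `N[v₀]` has a neighbor
outside `N[v₀]`). Then for every proper 3-coloring `c` of `G` there is a color `a ≠ c v₀`
such that every vertex `u ∉ N[v₀]` satisfies `c u ∈ {c v₀, a}`; in particular the induced
subgraph on `V ∖ N[v₀]` is bipartite. -/
theorem stmt_9 {V : Type*} (G : SimpleGraph V) (hconn : G.Connected)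
    (hdiam : ∀ x y : V, G.dist x y ≤ 2) (v₀ : V)
    (hdisc : ¬ (G.induce {u : V | ¬ G.Adj v₀ u ∧ u ≠ v₀}).Connected)
    (hedge : ∀ u : V, ¬ G.Adj v₀ u → u ≠ v₀ →
      ∃ w : V, ¬ G.Adj v₀ w ∧ w ≠ v₀ ∧ G.Adj u w) :
    ∀ c : G.Coloring (Fin 3),
      (∃ a : Fin 3, a ≠ c v₀ ∧
        ∀ u : V, ¬ G.Adj v₀ u → u ≠ v₀ → (c u = c v₀ ∨ c u = a)) ∧
      (G.induce {u : V | ¬ G.Adj v₀ u ∧ u ≠ v₀}).Colorable 2 := by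
  classical
  intro c
  set S : Set V := {u : V | ¬ G.Adj v₀ u ∧ u ≠ v₀} with hS
  -- the key "pair" lemma
  have pair : ∀ (u w : V) (hu : u ∈ S) (hw : w ∈ S),
      ¬ (G.induce S).Reachable ⟨u, hu⟩ ⟨w, hw⟩ →
      (c u = c v₀ ∨ c w = c v₀ ∨ c u = c w) := by
    intro u w hu hw hnr
    obtain ⟨p, hp⟩ := (hconn u w).exists_walk_length_eq_dist
    rcases walk_cases p (by rw [hp]; exact hdiam u w) with rfl | hadj | ⟨t, h1, h2⟩
    · exact Or.inr (Or.inr rfl)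
    · exact absurd (SimpleGraph.Adj.reachable (by exact hadj :
        (G.induce S).Adj ⟨u, hu⟩ ⟨w, hw⟩)) hnr
    · by_cases ht : t ∈ S
      · exact absurd ((SimpleGraph.Adj.reachable (by exact h1 :
          (G.induce S).Adj ⟨u, hu⟩ ⟨t, ht⟩)).trans
          (SimpleGraph.Adj.reachable (by exact h2 :
          (G.induce S).Adj ⟨t, ht⟩ ⟨w, hw⟩))) hnr
      · have ht' : G.Adj v₀ t := by
          by_contra h
          exact ht ⟨h, fun he => hu.1 (he ▸ h1).symm⟩
        exact fin3_aux (c v₀) (c u) (c w) (c t)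
          (Ne.symm (c.valid ht')) (Ne.symm (c.valid h1)) (c.valid h2)
  have part1 : ∃ a : Fin 3, a ≠ c v₀ ∧
      ∀ u : V, ¬ G.Adj v₀ u → u ≠ v₀ → (c u = c v₀ ∨ c u = a) := by
    by_contra hno
    push_neg at hno
    obtain ⟨a₁, a₂, ha₁, ha₂, ha₁₂⟩ := fin3_two (c v₀)
    obtain ⟨x, hx1, hx2, hx3, hx4⟩ := hno a₁ ha₁
    obtain ⟨y, hy1, hy2, hy3, hy4⟩ := hno a₂ ha₂
    have hcx : c x = a₂ := fin3_eq (c v₀) a₁ a₂ (c x) ha₁ ha₂ ha₁₂ hx3 hx4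
    have hcy : c y = a₁ := fin3_eq (c v₀) a₂ a₁ (c y) ha₂ ha₁ (Ne.symm ha₁₂) hy3 hy4
    have hxS : x ∈ S := ⟨hx1, hx2⟩
    have hyS : y ∈ S := ⟨hy1, hy2⟩
    have hxy' : c x ≠ c y := by rw [hcx, hcy]; exact Ne.symm ha₁₂
    set X : ↥S := ⟨x, hxS⟩
    set Y : ↥S := ⟨y, hyS⟩
    by_cases hxy : (G.induce S).Reachable X Y
    · -- x and y in the same component; use the other component
      haveI : Nonempty ↥S := ⟨X⟩
      have : ¬ (G.induce S).Preconnected := by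
        intro hpre
        exact hdisc (SimpleGraph.Connected.mk hpre)
      rw [SimpleGraph.Preconnected] at this
      push_neg at this
      obtain ⟨u, w, huw⟩ := this
      -- anything not reachable to X yields a contradiction
      have key2 : ∀ z : ↥S, ¬ (G.induce S).Reachable z X → c ↑z ≠ c v₀ → False := by
        intro z h1 h3
        have h2 : ¬ (G.induce S).Reachable z Y := fun r => h1 (r.trans hxy.symm)
        by_cases h : c ↑z = c x
        · rcases pair ↑z y z.2 hyS h2 with h' | h' | h'
          · exact h3 h'
          · exact hy3 h'
          · exact hxy' (h ▸ h' : c x = c y)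
        · rcases pair ↑z x z.2 hxS h1 with h' | h' | h'
          · exact h3 h'
          · exact hx3 h'
          · exact h h'
      have key : ∀ z : ↥S, ¬ (G.induce S).Reachable z X → False := by
        intro z hz
        obtain ⟨z', hz'1, hz'2, hadj⟩ := hedge ↑z z.2.1 z.2.2
        have hz'S : z' ∈ S := ⟨hz'1, hz'2⟩
        by_cases hcz : c ↑z = c v₀
        · have hcz' : c z' ≠ c v₀ := fun h => c.valid hadj (hcz.trans h.symm)
          have hz'X : ¬ (G.induce S).Reachable ⟨z', hz'S⟩ X := fun r =>
            hz ((SimpleGraph.Adj.reachable (by exact hadj :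
              (G.induce S).Adj z ⟨z', hz'S⟩)).trans r)
          exact key2 ⟨z', hz'S⟩ hz'X hcz'
        · exact key2 z hz hcz
      by_cases hux : (G.induce S).Reachable u X
      · exact key w (fun r => huw (hux.trans r.symm))
      · exact key u hux
    · rcases pair x y hxS hyS hxy with h' | h' | h'
      · exact hx3 h'
      · exact hy3 h'
      · exact hxy' h'
  refine ⟨part1, ?_⟩
  obtain ⟨a, ha, hall⟩ := part1
  refine ⟨⟨fun u => if c ↑u = c v₀ then 0 else 1, ?_⟩⟩
  intro u w hadj
  have hadj' : G.Adj ↑u ↑w := hadj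
  have hne : c ↑u ≠ c ↑w := c.valid hadj'
  rcases hall ↑u u.2.1 u.2.2 with h1 | h1 <;> rcases hall ↑w w.2.1 w.2.2 with h2 | h2
  · exact absurd (h1.trans h2.symm) hne
  · simp [h1, h2, ha, fun h : c ↑w = c v₀ => hne (h1.trans h.symm)]
  · simp [h1, h2, ha, fun h : c ↑u = c v₀ => hne (h.trans h2.symm)]
  · exact absurd (h1.trans h2.symm) hne
end

section
/- For all integers n, m ≥ 1, the graph G_{n,m} is connected, has diameter exactly 3, and has radius exactly 2. -/
/-- Vertices of the graph `G_{n,m}`: `Sum.inl ()` is `v₀`; `Sum.inr (Sum.inl j)` is `v_j`;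
`Sum.inr (Sum.inr (Sum.inl (i, j)))` is `u_{i,j}`; `Sum.inr (Sum.inr (Sum.inr (i, j)))`
is `w_{i,j}`. -/
abbrev GnmV (n m : ℕ) :=
  Unit ⊕ (Fin (8 * m) ⊕ ((Fin (n + 5 * m) × Fin (8 * m)) ⊕ (Fin (n + 5 * m) × Fin (8 * m))))

/-- The underlying (directional) relation of `G_{n,m}`: `v₀ v_j` for all `j`;
`v_j u_{i,j}` and `v_j w_{i,j}` for all `i, j`; and `u_{i,j} w_{i,ℓ}` for all `i` and all
`j ≠ ℓ`. -/
def GnmRel (n m : ℕ) : GnmV n m → GnmV n m → Prop :=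
  fun x y =>
    match x, y with
    | Sum.inl _, Sum.inr (Sum.inl _) => True
    | Sum.inr (Sum.inl j), Sum.inr (Sum.inr (Sum.inl p)) => p.2 = j
    | Sum.inr (Sum.inl j), Sum.inr (Sum.inr (Sum.inr p)) => p.2 = j
    | Sum.inr (Sum.inr (Sum.inl p)), Sum.inr (Sum.inr (Sum.inr q)) => p.1 = q.1 ∧ p.2 ≠ q.2
    | _, _ => False

/-- The graph `G_{n,m}`, whose edges are exactly: `v₀v_j` for all `j`; `v_ju_{i,j}` and
`v_jw_{i,j}` for all `i, j`; and `u_{i,j}w_{i,ℓ}` for all `i` and all `j ≠ ℓ`. -/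
def Gnm (n m : ℕ) : SimpleGraph (GnmV n m) :=
  SimpleGraph.fromRel (GnmRel n m)

open SimpleGraph

lemma two_le_dist_aux {V : Type*} {G : SimpleGraph V} (hc : G.Connected) {u v : V}
    (hne : u ≠ v) (hadj : ¬ G.Adj u v) : 2 ≤ G.dist u v := by
  have h1 := hc.pos_dist_of_ne hne
  have h2 : G.dist u v ≠ 1 := fun h => hadj (SimpleGraph.dist_eq_one_iff_adj.mp h)
  omega

lemma three_le_dist_aux {V : Type*} {G : SimpleGraph V} (hc : G.Connected) {u v : V}
    (hne : u ≠ v) (hadj : ¬ G.Adj u v)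
    (hcom : ∀ a, ¬ (G.Adj u a ∧ G.Adj a v)) : 3 ≤ G.dist u v := by
  have h2 := two_le_dist_aux hc hne hadj
  have h3 : G.dist u v ≠ 2 := by
    intro h
    obtain ⟨p, hp⟩ := (hc u v).exists_walk_length_eq_dist
    rw [h] at hp
    cases p with
    | nil => simp at hp
    | cons h1 q =>
      cases q with
      | nil => simp at hp
      | cons h2 q' =>
        cases q' with
        | nil => exact hcom _ ⟨h1, h2⟩
        | cons h3 q'' => simp [SimpleGraph.Walk.length_cons] at hp
  omega

section gnm
variable {n m : ℕ}

abbrev V0 : GnmV n m := Sum.inl ()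
abbrev Vv (j : Fin (8*m)) : GnmV n m := Sum.inr (Sum.inl j)
abbrev Uu (i : Fin (n+5*m)) (j : Fin (8*m)) : GnmV n m := Sum.inr (Sum.inr (Sum.inl (i, j)))
abbrev Ww (i : Fin (n+5*m)) (j : Fin (8*m)) : GnmV n m := Sum.inr (Sum.inr (Sum.inr (i, j)))

lemma adj_v0_vv (j : Fin (8*m)) : (Gnm n m).Adj V0 (Vv j) := by
  simp [Gnm, SimpleGraph.fromRel_adj, GnmRel]

lemma adj_vv_uu (i : Fin (n+5*m)) (j : Fin (8*m)) : (Gnm n m).Adj (Vv j) (Uu i j) := by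
  simp [Gnm, SimpleGraph.fromRel_adj, GnmRel]

lemma adj_vv_ww (i : Fin (n+5*m)) (j : Fin (8*m)) : (Gnm n m).Adj (Vv j) (Ww i j) := by
  simp [Gnm, SimpleGraph.fromRel_adj, GnmRel]

lemma adj_uu_ww (i : Fin (n+5*m)) {j l : Fin (8*m)} (h : j ≠ l) :
    (Gnm n m).Adj (Uu i j) (Ww i l) := by
  simp [Gnm, SimpleGraph.fromRel_adj, GnmRel, h]

lemma gnm_connected : (Gnm n m).Connected := by
  have key : ∀ x : GnmV n m, (Gnm n m).Reachable V0 x := by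
    rintro (⟨⟩ | j | ⟨i, j⟩ | ⟨i, j⟩)
    · exact Reachable.refl _
    · exact (adj_v0_vv j).reachable
    · exact (adj_v0_vv j).reachable.trans (adj_vv_uu i j).reachable
    · exact (adj_v0_vv j).reachable.trans (adj_vv_ww i j).reachable
  exact ⟨fun x y => (key x).symm.trans (key y)⟩

lemma dist_v0_le (x : GnmV n m) : (Gnm n m).dist V0 x ≤ 2 := by
  rcases x with ⟨⟩ | j | ⟨i, j⟩ | ⟨i, j⟩
  · simp [SimpleGraph.dist_self]
  · exact le_trans ((Gnm n m).dist_le (adj_v0_vv j).toWalk) (by simp)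
  · exact le_trans ((Gnm n m).dist_le (((adj_v0_vv j).toWalk.append (adj_vv_uu i j).toWalk)))
      (by simp)
  · exact le_trans ((Gnm n m).dist_le (((adj_v0_vv j).toWalk.append (adj_vv_ww i j).toWalk)))
      (by simp)

lemma dist_vv_le (hm : 1 ≤ m) (j : Fin (8*m)) (x : GnmV n m) :
    (Gnm n m).dist (Vv j) x ≤ 2 := by
  rcases x with ⟨⟩ | j' | ⟨i, j'⟩ | ⟨i, j'⟩
  · exact le_trans ((Gnm n m).dist_le (adj_v0_vv j).symm.toWalk) (by simp)
  · exact le_trans ((Gnm n m).dist_le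
      ((adj_v0_vv j).symm.toWalk.append (adj_v0_vv j').toWalk)) (by simp)
  · rcases eq_or_ne j' j with rfl | h
    · exact le_trans ((Gnm n m).dist_le (adj_vv_uu i j').toWalk) (by simp)
    · exact le_trans ((Gnm n m).dist_le
        ((adj_vv_ww i j).toWalk.append (adj_uu_ww i h).symm.toWalk)) (by simp)
  · rcases eq_or_ne j' j with rfl | h
    · exact le_trans ((Gnm n m).dist_le (adj_vv_ww i j').toWalk) (by simp)
    · exact le_trans ((Gnm n m).dist_le
        ((adj_vv_uu i j).toWalk.append (adj_uu_ww i h.symm).toWalk)) (by simp)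

end gnm

/-- For all `n, m ≥ 1`, the graph `G_{n,m}` is connected, has diameter
exactly 3, and has radius exactly 2. -/
theorem stmt_11 (n m : ℕ) (hn : 1 ≤ n) (hm : 1 ≤ m) :
    (Gnm n m).Connected ∧
    (∀ x y, (Gnm n m).dist x y ≤ 3) ∧
    (∃ x y, (Gnm n m).dist x y = 3) ∧
    (∃ u, ∀ x, (Gnm n m).dist u x ≤ 2) ∧
    (∀ u, ∃ x, 2 ≤ (Gnm n m).dist u x) := by
  have hc : (Gnm n m).Connected := gnm_connected
  have h8 : 1 < 8 * m := by omega
  have h6 : 1 < n + 5 * m := by omega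
  refine ⟨hc, ?_, ?_, ⟨V0, dist_v0_le⟩, ?_⟩
  · -- diameter ≤ 3
    intro x y
    have hnear : ∀ y : GnmV n m, ∃ j : Fin (8*m), (Gnm n m).dist (Vv j) y ≤ 1 := by
      rintro (⟨⟩ | j | ⟨i, j⟩ | ⟨i, j⟩)
      · exact ⟨⟨0, by omega⟩, le_trans ((Gnm n m).dist_le (adj_v0_vv _).symm.toWalk) (by simp)⟩
      · exact ⟨j, by simp [SimpleGraph.dist_self]⟩
      · exact ⟨j, le_trans ((Gnm n m).dist_le (adj_vv_uu i j).toWalk) (by simp)⟩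
      · exact ⟨j, le_trans ((Gnm n m).dist_le (adj_vv_ww i j).toWalk) (by simp)⟩
    obtain ⟨j, hj⟩ := hnear y
    calc (Gnm n m).dist x y ≤ (Gnm n m).dist x (Vv j) + (Gnm n m).dist (Vv j) y :=
          hc.dist_triangle
      _ ≤ 2 + 1 := by
          have := dist_vv_le (n := n) hm j x
          rw [SimpleGraph.dist_comm] at this
          omega
      _ = 3 := rfl
  · -- diameter ≥ 3 pair
    refine ⟨Uu ⟨0, by omega⟩ ⟨0, by omega⟩, Uu ⟨1, h6⟩ ⟨1, h8⟩, ?_⟩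
    have h3 : 3 ≤ (Gnm n m).dist (Uu (n := n) (m := m) ⟨0, by omega⟩ ⟨0, by omega⟩)
        (Uu ⟨1, h6⟩ ⟨1, h8⟩) := by
      apply three_le_dist_aux hc
      · simp [Fin.ext_iff]
      · simp [Gnm, SimpleGraph.fromRel_adj, GnmRel]
      · rintro (⟨⟩ | j | ⟨i, j⟩ | ⟨i, j⟩) ⟨h1, h2⟩ <;>
          simp [Gnm, SimpleGraph.fromRel_adj, GnmRel, Fin.ext_iff] at h1 h2 <;> omega
    have h3' : (Gnm n m).dist (Uu (n := n) (m := m) ⟨0, by omega⟩ ⟨0, by omega⟩)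
        (Uu ⟨1, h6⟩ ⟨1, h8⟩) ≤ 3 := by
      apply le_trans ((Gnm n m).dist_le
        (((adj_uu_ww ⟨0, by omega⟩ (j := ⟨0, by omega⟩) (l := ⟨1, h8⟩)
          (by simp [Fin.ext_iff])).toWalk.append
          (adj_vv_ww ⟨0, by omega⟩ ⟨1, h8⟩).symm.toWalk).append
          (adj_vv_uu ⟨1, h6⟩ ⟨1, h8⟩).toWalk))
      simp
    omega
  · -- radius ≥ 2
    rintro (⟨⟩ | j | ⟨i, j⟩ | ⟨i, j⟩)
    · refine ⟨Uu ⟨0, by omega⟩ ⟨0, by omega⟩, two_le_dist_aux hc (by simp) ?_⟩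
      simp [Gnm, SimpleGraph.fromRel_adj, GnmRel]
    · by_cases hj : (j : ℕ) = 0
      · refine ⟨Uu ⟨0, by omega⟩ ⟨1, h8⟩, two_le_dist_aux hc (by simp) ?_⟩
        simp only [Gnm, SimpleGraph.fromRel_adj, GnmRel]
        rintro ⟨-, h | h⟩
        · simp [Fin.ext_iff] at h; omega
        · exact h
      · refine ⟨Uu ⟨0, by omega⟩ ⟨0, by omega⟩, two_le_dist_aux hc (by simp) ?_⟩
        simp only [Gnm, SimpleGraph.fromRel_adj, GnmRel]
        rintro ⟨-, h | h⟩
        · simp [Fin.ext_iff] at h; omega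
        · exact h
    · exact ⟨V0, two_le_dist_aux hc (by simp) (by simp [Gnm, SimpleGraph.fromRel_adj, GnmRel])⟩
    · exact ⟨V0, two_le_dist_aux hc (by simp) (by simp [Gnm, SimpleGraph.fromRel_adj, GnmRel])⟩
end

section
/- For all integers n, m ≥ 1, the graph G_{n,m} is triangle-free and siblings-free. -/
lemma gnm_adj (n m : ℕ) (a b : GnmV n m) :
    (Gnm n m).Adj a b ↔ a ≠ b ∧ (GnmRel n m a b ∨ GnmRel n m b a) :=
  SimpleGraph.fromRel_adj _ _ _

lemma gnm_key (n m : ℕ) (hn : 1 ≤ n) (hm : 1 ≤ m) (a b : GnmV n m)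
    (hne : a ≠ b) (hnadj : ¬ (Gnm n m).Adj a b) :
    ∃ x, (Gnm n m).Adj a x ∧ ¬ (Gnm n m).Adj b x := by
  have hnt : Nontrivial (Fin (8 * m)) := Fin.nontrivial_iff_two_le.mpr (by omega)
  have i0 : Fin (n + 5 * m) := ⟨0, by omega⟩
  rcases a with _ | (j | (⟨i, j⟩ | ⟨i, j⟩))
  · rcases b with _ | (l | (⟨i', l⟩ | ⟨i', l⟩))
    · exact absurd rfl hne
    · exact absurd (by simp [gnm_adj, GnmRel]) hnadj
    · obtain ⟨k, hk⟩ := exists_ne l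
      exact ⟨Sum.inr (Sum.inl k), by simp [gnm_adj, GnmRel], by simp [gnm_adj, GnmRel, hk.symm]⟩
    · obtain ⟨k, hk⟩ := exists_ne l
      exact ⟨Sum.inr (Sum.inl k), by simp [gnm_adj, GnmRel], by simp [gnm_adj, GnmRel, hk.symm]⟩
  · rcases b with _ | (l | (⟨i', l⟩ | ⟨i', l⟩))
    · exact absurd (by simp [gnm_adj, GnmRel]) hnadj
    · have hjl : j ≠ l := by simpa using hne
      exact ⟨Sum.inr (Sum.inr (Sum.inl (i0, j))), by simp [gnm_adj, GnmRel],
        by simp [gnm_adj, GnmRel, hjl, hjl.symm]⟩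
    · exact ⟨Sum.inl (), by simp [gnm_adj, GnmRel], by simp [gnm_adj, GnmRel]⟩
    · exact ⟨Sum.inl (), by simp [gnm_adj, GnmRel], by simp [gnm_adj, GnmRel]⟩
  · rcases b with _ | (l | (⟨i', l⟩ | ⟨i', l⟩))
    · obtain ⟨k, hk⟩ := exists_ne j
      exact ⟨Sum.inr (Sum.inr (Sum.inr (i, k))), by simp [gnm_adj, GnmRel, hk.symm],
        by simp [gnm_adj, GnmRel]⟩
    · exact ⟨Sum.inr (Sum.inl j), by simp [gnm_adj, GnmRel], by simp [gnm_adj, GnmRel]⟩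
    · rcases eq_or_ne i i' with rfl | hii
      · have hjl : j ≠ l := by
          intro h; exact hne (by simp [h])
        exact ⟨Sum.inr (Sum.inr (Sum.inr (i, l))), by simp [gnm_adj, GnmRel, hjl],
          by simp [gnm_adj, GnmRel]⟩
      · obtain ⟨k, hk⟩ := exists_ne j
        exact ⟨Sum.inr (Sum.inr (Sum.inr (i, k))), by simp [gnm_adj, GnmRel, hk.symm],
          by simp [gnm_adj, GnmRel, hii, hii.symm]⟩
    · obtain ⟨k, hk⟩ := exists_ne j
      exact ⟨Sum.inr (Sum.inr (Sum.inr (i, k))), by simp [gnm_adj, GnmRel, hk.symm],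
        by simp [gnm_adj, GnmRel]⟩
  · rcases b with _ | (l | (⟨i', l⟩ | ⟨i', l⟩))
    · obtain ⟨k, hk⟩ := exists_ne j
      exact ⟨Sum.inr (Sum.inr (Sum.inl (i, k))), by simp [gnm_adj, GnmRel, hk],
        by simp [gnm_adj, GnmRel]⟩
    · exact ⟨Sum.inr (Sum.inl j), by simp [gnm_adj, GnmRel], by simp [gnm_adj, GnmRel]⟩
    · obtain ⟨k, hk⟩ := exists_ne j
      exact ⟨Sum.inr (Sum.inr (Sum.inl (i, k))), by simp [gnm_adj, GnmRel, hk],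
        by simp [gnm_adj, GnmRel]⟩
    · rcases eq_or_ne i i' with rfl | hii
      · have hjl : j ≠ l := by
          intro h; exact hne (by simp [h])
        exact ⟨Sum.inr (Sum.inr (Sum.inl (i, l))), by simp [gnm_adj, GnmRel, hjl.symm],
          by simp [gnm_adj, GnmRel]⟩
      · obtain ⟨k, hk⟩ := exists_ne j
        exact ⟨Sum.inr (Sum.inr (Sum.inl (i, k))), by simp [gnm_adj, GnmRel, hk],
          by simp [gnm_adj, GnmRel, hii, hii.symm]⟩


/-- For all `n, m ≥ 1`, the graph `G_{n,m}` is triangle-free and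
siblings-free. -/
theorem stmt_12 (n m : ℕ) (hn : 1 ≤ n) (hm : 1 ≤ m) :
    (Gnm n m).CliqueFree 3 ∧
    ∀ u v : GnmV n m, u ≠ v → ¬ (Gnm n m).Adj u v →
      ¬ ((Gnm n m).neighborSet u ⊆ (Gnm n m).neighborSet v ∨
         (Gnm n m).neighborSet v ⊆ (Gnm n m).neighborSet u) := by
  constructor
  · intro s hs
    rw [SimpleGraph.is3Clique_iff] at hs
    obtain ⟨a, b, c, hab, hac, hbc, -⟩ := hs
    rcases a with _ | (j | (⟨i, j⟩ | ⟨i, j⟩)) <;>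
      rcases b with _ | (j' | (⟨i', j'⟩ | ⟨i', j'⟩)) <;>
      rcases c with _ | (j'' | (⟨i'', j''⟩ | ⟨i'', j''⟩)) <;>
      simp_all [gnm_adj, GnmRel]
  · intro u v huv hnadj h
    rcases h with h | h
    · obtain ⟨x, hax, hbx⟩ := gnm_key n m hn hm u v huv hnadj
      exact hbx (h hax)
    · obtain ⟨x, hax, hbx⟩ := gnm_key n m hn hm v u (Ne.symm huv)
        (fun h' => hnadj h'.symm)
      exact hbx (h hax)
end

section
/- For all integers n, m ≥ 1, the graph G_{n,m} admits at least 2^{8m} · 2^{n+5m} distinct proper 3-colorings in which the vertex v₀ receives a prescribed color; in particular, G_{n,m} is 3-colorable. -/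
def colFun (n m : ℕ) (a : Fin 3) (f : Fin (8 * m) → Bool)
    (g : Fin (n + 5 * m) → Bool) : GnmV n m → Fin 3
  | Sum.inl _ => a
  | Sum.inr (Sum.inl j) => a + (if f j then 1 else 2)
  | Sum.inr (Sum.inr (Sum.inl p)) =>
      if g p.1 then a else a + (if f p.2 then 2 else 1)
  | Sum.inr (Sum.inr (Sum.inr p)) =>
      if g p.1 then a + (if f p.2 then 2 else 1) else a

lemma colFun_valid (n m : ℕ) (a : Fin 3) (f : Fin (8 * m) → Bool)
    (g : Fin (n + 5 * m) → Bool) {x y : GnmV n m} (h : GnmRel n m x y) :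
    colFun n m a f g x ≠ colFun n m a f g y := by
  rcases x with _ | (xj | (⟨xi, xj⟩ | ⟨xi, xj⟩)) <;>
    rcases y with _ | (yj | (⟨yi, yj⟩ | ⟨yi, yj⟩)) <;>
    simp only [GnmRel] at h
  · simp only [colFun]
    rcases f yj with _ | _ <;> revert a <;> decide
  · subst h
    simp only [colFun]
    rcases f yj with _ | _ <;> rcases g yi with _ | _ <;> revert a <;> decide
  · subst h
    simp only [colFun]
    rcases f yj with _ | _ <;> rcases g yi with _ | _ <;> revert a <;> decide
  · obtain ⟨rfl, -⟩ := h
    simp only [colFun]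
    rcases g xi with _ | _ <;> rcases f xj with _ | _ <;> rcases f yj with _ | _ <;>
      revert a <;> decide

def colC (n m : ℕ) (a : Fin 3) (p : (Fin (8 * m) → Bool) × (Fin (n + 5 * m) → Bool)) :
    (Gnm n m).Coloring (Fin 3) :=
  SimpleGraph.Coloring.mk (colFun n m a p.1 p.2) (by
    intro x y hxy
    obtain ⟨hne, h | h⟩ := hxy
    · exact colFun_valid n m a p.1 p.2 h
    · exact (colFun_valid n m a p.1 p.2 h).symm)

/-- For all `n, m ≥ 1` and every prescribed color `a`, the graph
`G_{n,m}` admits at least `2^(8m) · 2^(n+5m)` distinct proper 3-colorings in which the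
vertex `v₀` receives the color `a`; in particular, `G_{n,m}` is 3-colorable. -/
theorem stmt_13 (n m : ℕ) (hn : 1 ≤ n) (hm : 1 ≤ m) (a : Fin 3) :
    (∃ S : Set ((Gnm n m).Coloring (Fin 3)),
      2 ^ (8 * m) * 2 ^ (n + 5 * m) ≤ S.ncard ∧
      ∀ c ∈ S, c (Sum.inl ()) = a) ∧
    (Gnm n m).Colorable 3 := by
  have hj0 : 0 < 8 * m := by omega
  refine ⟨⟨Set.range (colC n m a), ?_, ?_⟩, ⟨colC n m a (fun _ => true, fun _ => true)⟩⟩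
  · have hinj : Function.Injective (colC n m a) := by
      intro ⟨f, g⟩ ⟨f', g'⟩ hfg
      have hcol : ∀ x, colFun n m a f g x = colFun n m a f' g' x := fun x =>
        congrFun (congrArg DFunLike.coe hfg) x
      clear hfg
      have hf : f = f' := by
        funext j
        have hv := hcol (Sum.inr (Sum.inl j))
        simp only [colFun] at hv
        clear hcol
        cases hb : f j <;> cases hb' : f' j <;> simp only [hb, hb'] at hv ⊢ <;>
          first
          | rfl
          | (exfalso; revert hv; revert a; decide)
      have hg : g = g' := by
        funext i
        have hu := hcol (Sum.inr (Sum.inr (Sum.inl (i, ⟨0, hj0⟩))))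
        simp only [colFun] at hu
        clear hcol
        cases hb : g i <;> cases hb' : g' i <;>
          cases hc : f ⟨0, hj0⟩ <;> cases hc' : f' ⟨0, hj0⟩ <;>
          simp only [hb, hb', hc, hc'] at hu ⊢ <;>
          first
          | rfl
          | (exfalso; revert hu; revert a; decide)
      simp [hf, hg]
    rw [← Nat.card_coe_set_eq, Nat.card_range_of_injective hinj]
    simp [Nat.card_eq_fintype_card, mul_comm]
  · rintro c ⟨p, rfl⟩
    rfl
end

section
/- Let G be a connected simple graph with diameter at most 3, let Δ be its maximum degree, and let u be any vertex of G. Then the set D = {u} ∪ {v : d(u,v) = 2} is a dominating set of G, and |D| ≤ deg(u)·Δ + 1, where deg(u) is the degree of u and d denotes graph distance. -/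
open SimpleGraph

lemma aux_step {V : Type*} {G : SimpleGraph V} {u w : V} {n : ℕ}
    (h : G.dist u w = n + 1) : ∃ x, G.Adj x w ∧ G.dist u x = n := by
  have hr : G.Reachable u w := by
    by_contra hc
    rw [SimpleGraph.dist_eq_zero_of_not_reachable hc] at h
    omega
  obtain ⟨p, hp⟩ := hr.exists_walk_length_eq_dist
  rw [h] at hp
  cases p with
  | nil => simp at hp
  | cons ha q =>
    obtain ⟨x, q', h', hc⟩ := SimpleGraph.Walk.exists_cons_eq_concat ha q
    have hlen : q'.length = n := by
      rw [hc, SimpleGraph.Walk.length_concat] at hp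
      omega
    have h1 : G.dist u x ≤ n := hlen ▸ SimpleGraph.dist_le q'
    have h2 : n ≤ G.dist u x := by
      obtain ⟨r, hrlen⟩ := (q'.reachable).exists_walk_length_eq_dist
      have := SimpleGraph.dist_le (r.concat h')
      rw [SimpleGraph.Walk.length_concat, hrlen, h] at this
      omega
    exact ⟨x, h', le_antisymm h1 h2⟩

/-- Let `G` be a connected simple graph with diameter at most 3,
maximum degree `Δ`, and let `u` be any vertex. Then `D = {u} ∪ {v : d(u,v) = 2}` is a
dominating set of `G` of size at most `deg(u)·Δ + 1`. -/
theorem stmt_15 {V : Type*} [Fintype V] (G : SimpleGraph V) [DecidableRel G.Adj]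
    (hconn : G.Connected) (hdiam : ∀ x y : V, G.dist x y ≤ 3) (u : V) :
    (∀ w : V, w ∉ ({u} ∪ {v : V | G.dist u v = 2} : Set V) →
      ∃ x ∈ ({u} ∪ {v : V | G.dist u v = 2} : Set V), G.Adj x w) ∧
    ({u} ∪ {v : V | G.dist u v = 2} : Set V).ncard ≤ G.degree u * G.maxDegree + 1 := by
  classical
  constructor
  · intro w hw
    simp only [Set.mem_union, Set.mem_singleton_iff, Set.mem_setOf_eq, not_or] at hw
    have hne : u ≠ w := fun h => hw.1 h.symm
    have hpos : 0 < G.dist u w := hconn.pos_dist_of_ne hne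
    have hle := hdiam u w
    interval_cases h : G.dist u w
    · exact ⟨u, Or.inl rfl, (SimpleGraph.dist_eq_one_iff_adj.mp h)⟩
    · exact absurd rfl hw.2
    · obtain ⟨x, hadj, hdx⟩ := aux_step (n := 2) h
      exact ⟨x, Or.inr hdx, hadj⟩
  · have hsub : (Set.toFinset {v : V | G.dist u v = 2}) ⊆
        (G.neighborFinset u).biUnion (fun n => G.neighborFinset n) := by
      intro v hv
      rw [Set.mem_toFinset, Set.mem_setOf_eq] at hv
      obtain ⟨x, hadj, hdx⟩ := aux_step (u := u) (w := v) (n := 1) hv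
      rw [SimpleGraph.dist_eq_one_iff_adj] at hdx
      simp only [Finset.mem_biUnion, SimpleGraph.mem_neighborFinset]
      exact ⟨x, hdx, hadj⟩
    have hcard : (Set.toFinset {v : V | G.dist u v = 2}).card ≤ G.degree u * G.maxDegree := by
      calc (Set.toFinset {v : V | G.dist u v = 2}).card
          ≤ ((G.neighborFinset u).biUnion (fun n => G.neighborFinset n)).card :=
            Finset.card_le_card hsub
        _ ≤ ∑ n ∈ G.neighborFinset u, (G.neighborFinset n).card :=
            Finset.card_biUnion_le
        _ ≤ ∑ _n ∈ G.neighborFinset u, G.maxDegree := by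
            apply Finset.sum_le_sum
            intro n _
            rw [← SimpleGraph.degree]
            exact G.degree_le_maxDegree n
        _ = G.degree u * G.maxDegree := by
            rw [Finset.sum_const, smul_eq_mul, ← SimpleGraph.degree]
    calc ({u} ∪ {v : V | G.dist u v = 2} : Set V).ncard
        ≤ ({u} : Set V).ncard + ({v : V | G.dist u v = 2} : Set V).ncard :=
          Set.ncard_union_le _ _
      _ ≤ 1 + G.degree u * G.maxDegree := by
          rw [Set.ncard_singleton]
          have : ({v : V | G.dist u v = 2} : Set V).ncard =
              (Set.toFinset {v : V | G.dist u v = 2}).card := by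
            rw [Set.ncard_eq_toFinset_card']
          omega
      _ = G.degree u * G.maxDegree + 1 := by omega
end
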